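/- Let q be a prime power, n coprime to q and not divisible by 3, and C a cyclic code of length n over F_q whose defining set contains {0, 1, 3, 4, 6, 7}. Then the minimum distance of C is at least 6. -/
import Mathlib

open Polynomial Finset

/-- Key combinatorial/algebraic lemma: if `u` is supported on `E` (`|E| ≤ 5`),
the `γ e` are distinct nonzero cubes of the `β e`, and the six power-sum
conditions hold, then `E` is empty. -/
lemma cyclic_aux {K : Type*} [Field K] (E : Finset ℕ) (u β γ : ℕ → K)
    (hu0 : ∀ e ∈ E, u e ≠ 0) (hβ0 : ∀ e ∈ E, β e ≠ 0) (hγ0 : ∀ e ∈ E, γ e ≠ 0)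
    (hβγ : ∀ e ∈ E, β e ^ 3 = γ e)
    (hγinj : ∀ e ∈ E, ∀ e' ∈ E, γ e = γ e' → e = e')
    (hk : E.card ≤ 5)
    (hs0 : ∑ e ∈ E, u e = 0)
    (hs1 : ∑ e ∈ E, u e * β e = 0)
    (hs3 : ∑ e ∈ E, u e * γ e = 0)
    (hs4 : ∑ e ∈ E, u e * β e * γ e = 0)
    (hs6 : ∑ e ∈ E, u e * γ e ^ 2 = 0)
    (hs7 : ∑ e ∈ E, u e * β e * γ e ^ 2 = 0) :
    E = ∅ := by
  classical
  rcases E.eq_empty_or_nonempty with h | ⟨j0, hj0⟩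
  · exact h
  exfalso
  set Q : ℕ → Polynomial K := fun j => ∏ e ∈ E.erase j, (1 - C (γ e) * X) with hQ
  set D : Polynomial K := ∏ e ∈ E, (1 - C (γ e) * X) with hD
  have hDQ : ∀ j ∈ E, D = (1 - C (γ j) * X) * Q j :=
    fun j hj => (Finset.mul_prod_erase E _ hj).symm
  -- key decomposition lemma
  have key : ∀ v : ℕ → K, ∑ e ∈ E, v e = 0 → ∑ e ∈ E, v e * γ e = 0 →
      ∑ e ∈ E, v e * γ e ^ 2 = 0 →
      ∑ j ∈ E, C (v j) * Q j = X ^ 3 * ∑ j ∈ E, C (v j * γ j ^ 3) * Q j := by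
    intro v hv0 hv1 hv2
    have hterm : ∀ j ∈ E, C (v j) * Q j
        = C (v j) * D + C (v j * γ j) * (X * D) + C (v j * γ j ^ 2) * (X ^ 2 * D)
          + X ^ 3 * (C (v j * γ j ^ 3) * Q j) := by
      intro j hj
      rw [hDQ j hj]
      simp only [map_mul, map_pow]
      ring
    rw [Finset.sum_congr rfl hterm]
    rw [Finset.sum_add_distrib, Finset.sum_add_distrib, Finset.sum_add_distrib,
      ← Finset.sum_mul, ← Finset.sum_mul, ← Finset.sum_mul, ← Finset.mul_sum,
      ← map_sum, ← map_sum, ← map_sum, hv0, hv1, hv2]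
    simp
  have keyA := key u hs0 hs3 hs6
  have keyB := key (fun e => u e * β e) hs1 hs4 hs7
  set RA : Polynomial K := ∑ j ∈ E, C (u j * γ j ^ 3) * Q j with hRAdef
  set RB : Polynomial K := ∑ j ∈ E, C (u j * β j * γ j ^ 3) * Q j with hRBdef
  set A : Polynomial K := ∑ j ∈ E, C (u j) * Q j with hAdef
  set B : Polynomial K := ∑ j ∈ E, C (u j * β j) * Q j with hBdef
  -- evaluation facts
  have hγne : ∀ j ∈ E, ∀ e ∈ E.erase j, γ e ≠ γ j := by
    intro j hj e he h
    exact (Finset.ne_of_mem_erase he) (hγinj e (Finset.mem_of_mem_erase he) j hj h)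
  have hW : ∀ j ∈ E, Polynomial.eval (γ j)⁻¹ (Q j) ≠ 0 := by
    intro j hj
    rw [hQ]
    simp only [Polynomial.eval_prod, Polynomial.eval_sub, Polynomial.eval_one,
      Polynomial.eval_mul, Polynomial.eval_C, Polynomial.eval_X]
    refine Finset.prod_ne_zero_iff.mpr ?_
    intro e he h
    rw [sub_eq_zero] at h
    exact hγne j hj e he ((mul_inv_eq_one₀ (hγ0 j hj)).mp h.symm)
  have hQzero : ∀ j ∈ E, ∀ i ∈ E, i ≠ j → Polynomial.eval (γ j)⁻¹ (Q i) = 0 := by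
    intro j hj i hi hne
    rw [hQ]
    rw [Polynomial.eval_prod]
    refine Finset.prod_eq_zero (Finset.mem_erase.mpr ⟨fun h => hne h.symm, hj⟩) ?_
    simp [mul_inv_cancel₀ (hγ0 j hj)]
  have evalsum : ∀ w : ℕ → K, ∀ j ∈ E,
      Polynomial.eval (γ j)⁻¹ (∑ i ∈ E, C (w i) * Q i) = w j * Polynomial.eval (γ j)⁻¹ (Q j) := by
    intro w j hj
    rw [Polynomial.eval_finset_sum]
    rw [Finset.sum_eq_single_of_mem j hj]
    · simp
    · intro i hi hne
      simp [hQzero j hj i hi hne]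
  have eval_keyA : ∀ j ∈ E, u j * Polynomial.eval (γ j)⁻¹ (Q j)
      = ((γ j)⁻¹) ^ 3 * Polynomial.eval (γ j)⁻¹ RA := by
    intro j hj
    have h := congrArg (Polynomial.eval ((γ j)⁻¹)) keyA
    rw [evalsum u j hj] at h
    simpa using h
  have eval_keyB : ∀ j ∈ E, u j * β j * Polynomial.eval (γ j)⁻¹ (Q j)
      = ((γ j)⁻¹) ^ 3 * Polynomial.eval (γ j)⁻¹ RB := by
    intro j hj
    have h := congrArg (Polynomial.eval ((γ j)⁻¹)) keyB
    rw [evalsum (fun e => u e * β e) j hj] at h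
    simpa using h
  have eRA : ∀ j ∈ E, Polynomial.eval (γ j)⁻¹ RA
      = u j * Polynomial.eval (γ j)⁻¹ (Q j) * γ j ^ 3 := by
    intro j hj
    have hγj : γ j ≠ 0 := hγ0 j hj
    have h := eval_keyA j hj
    rw [inv_pow] at h
    have h2 := (inv_mul_eq_iff_eq_mul₀ (pow_ne_zero 3 hγj)).mp h.symm
    rw [h2]; ring
  have eRB : ∀ j ∈ E, Polynomial.eval (γ j)⁻¹ RB
      = u j * β j * Polynomial.eval (γ j)⁻¹ (Q j) * γ j ^ 3 := by
    intro j hj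
    have hγj : γ j ≠ 0 := hγ0 j hj
    have h := eval_keyB j hj
    rw [inv_pow] at h
    have h2 := (inv_mul_eq_iff_eq_mul₀ (pow_ne_zero 3 hγj)).mp h.symm
    rw [h2]; ring
  -- RA and RB are nonzero
  have hRA0 : RA ≠ 0 := by
    intro h
    have := eRA j0 hj0
    rw [h] at this
    simp only [Polynomial.eval_zero] at this
    exact hu0 j0 hj0 (by
      rcases mul_eq_zero.mp this.symm with h' | h'
      · rcases mul_eq_zero.mp h' with h'' | h''
        · exact h''
        · exact absurd h'' (hW j0 hj0)
      · exact absurd h' (pow_ne_zero 3 (hγ0 j0 hj0)))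
  have hRB0 : RB ≠ 0 := by
    intro h
    have := eRB j0 hj0
    rw [h] at this
    simp only [Polynomial.eval_zero] at this
    have : u j0 * β j0 * Polynomial.eval (γ j0)⁻¹ (Q j0) * γ j0 ^ 3 = 0 := this.symm
    rcases mul_eq_zero.mp this with h' | h'
    · rcases mul_eq_zero.mp h' with h'' | h''
      · rcases mul_eq_zero.mp h'' with h3 | h3
        · exact hu0 j0 hj0 h3
        · exact hβ0 j0 hj0 h3
      · exact hW j0 hj0 h''
    · exact pow_ne_zero 3 (hγ0 j0 hj0) h'
  -- degree bounds
  have hfac : ∀ g : K, (1 - C g * X : Polynomial K).natDegree ≤ 1 := by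
    intro g
    refine (Polynomial.natDegree_sub_le _ _).trans ?_
    simp only [Polynomial.natDegree_one]
    exact max_le (Nat.zero_le 1) ((Polynomial.natDegree_C_mul_le _ _).trans (by simp))
  have hQdeg : ∀ j ∈ E, (Q j).natDegree ≤ E.card - 1 := by
    intro j hj
    rw [hQ]
    refine (Polynomial.natDegree_prod_le _ _).trans ?_
    calc ∑ e ∈ E.erase j, (1 - C (γ e) * X : Polynomial K).natDegree
        ≤ ∑ _e ∈ E.erase j, 1 := Finset.sum_le_sum (fun e _ => hfac (γ e))
      _ = E.card - 1 := by
          rw [Finset.sum_const, smul_eq_mul, mul_one, Finset.card_erase_of_mem hj]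
  have hsumdeg : ∀ w : ℕ → K, (∑ j ∈ E, C (w j) * Q j).natDegree ≤ E.card - 1 := by
    intro w
    refine Polynomial.natDegree_sum_le_of_forall_le _ _ ?_
    intro j hj
    exact (Polynomial.natDegree_C_mul_le _ _).trans (hQdeg j hj)
  have hAdeg : A.natDegree ≤ E.card - 1 := hsumdeg u
  have hBdeg : B.natDegree ≤ E.card - 1 := hsumdeg (fun e => u e * β e)
  have hX3 : (X ^ 3 : Polynomial K) ≠ 0 := pow_ne_zero 3 Polynomial.X_ne_zero
  have hdRA : 3 + RA.natDegree ≤ E.card - 1 := by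
    have h := Polynomial.natDegree_mul hX3 hRA0
    rw [Polynomial.natDegree_X_pow, ← keyA] at h
    omega
  have hdRB : 3 + RB.natDegree ≤ E.card - 1 := by
    have h := Polynomial.natDegree_mul hX3 hRB0
    rw [Polynomial.natDegree_X_pow, ← keyB] at h
    omega
  have hk1 : 1 ≤ E.card := Finset.card_pos.mpr ⟨j0, hj0⟩
  -- the polynomial F := RA^3 - X * RB^3 vanishes at all (γ j)⁻¹
  set F : Polynomial K := RA ^ 3 - X * RB ^ 3 with hF
  have hFeval : ∀ j ∈ E, Polynomial.eval (γ j)⁻¹ F = 0 := by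
    intro j hj
    rw [hF]
    simp only [Polynomial.eval_sub, Polynomial.eval_mul, Polynomial.eval_pow,
      Polynomial.eval_X]
    rw [eRA j hj, eRB j hj, ← hβγ j hj]
    have hβne : β j ≠ 0 := hβ0 j hj
    field_simp
    ring
  -- F = 0 by counting roots
  have hFdeg : F.natDegree < E.card := by
    refine lt_of_le_of_lt ((Polynomial.natDegree_sub_le _ _).trans
      (max_le_max (Polynomial.natDegree_pow _ _).le
        (Polynomial.natDegree_mul_le.trans (by
          rw [Polynomial.natDegree_X, Polynomial.natDegree_pow])))) ?_
    exact max_lt (by omega) (by omega)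
  have hinj : ∀ j ∈ E, ∀ j' ∈ E, (γ j)⁻¹ = (γ j')⁻¹ → j = j' := by
    intro j hj j' hj' h
    exact hγinj j hj j' hj' (inv_injective h)
  have hF0 : F = 0 := by
    refine Polynomial.eq_zero_of_natDegree_lt_card_of_eval_eq_zero' F
      (E.image fun j => (γ j)⁻¹) ?_ ?_
    · intro x hx
      rcases Finset.mem_image.mp hx with ⟨j, hj, rfl⟩
      exact hFeval j hj
    · rwa [Finset.card_image_of_injOn (fun j hj j' hj' h => hinj j hj j' hj' h)]
  have hRARB : RA ^ 3 = X * RB ^ 3 := by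
    have := sub_eq_zero.mp (hF ▸ hF0)
    exact this
  -- degree parity contradiction
  have h1 : (RA ^ 3).natDegree = 3 * RA.natDegree := Polynomial.natDegree_pow _ _
  have h2 : (X * RB ^ 3 : Polynomial K).natDegree = 1 + 3 * RB.natDegree := by
    rw [Polynomial.natDegree_mul Polynomial.X_ne_zero (pow_ne_zero _ hRB0),
      Polynomial.natDegree_X, Polynomial.natDegree_pow]
  rw [hRARB, h2] at h1
  omega

set_option maxHeartbeats 1000000 in
/-- If the defining set of a cyclic code of length `n` over `F_q` contains
`{0, 1, 3, 4, 6, 7}` and `3 ∤ n`, then the minimum distance is at least `6`: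
every nonzero codeword has Hamming weight `≥ 6`. -/
theorem cyclic_code_min_dist (Fq : Type*) [Field Fq] [Fintype Fq]
    (n : ℕ) (hn : 0 < n) (hcop : Nat.Coprime n (Fintype.card Fq))
    (h3 : ¬ (3 ∣ n))
    (α : AlgebraicClosure Fq) (hα : orderOf α = n)
    (S : Finset ℕ) (hS : ({0, 1, 3, 4, 6, 7} : Finset ℕ) ⊆ S)
    (c : Polynomial Fq) (hc : c ≠ 0) (hdeg : c.natDegree < n)
    (hroot : ∀ i ∈ S, Polynomial.aeval (α ^ i) c = 0) :
    6 ≤ c.support.card := by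
  by_contra hlt
  push_neg at hlt
  have hα0 : α ≠ 0 := by
    intro h
    have h1 : α ^ n = 1 := by rw [← hα]; exact pow_orderOf_eq_one α
    rw [h, zero_pow hn.ne'] at h1
    exact zero_ne_one h1
  have hsum : ∀ i : ℕ, Polynomial.aeval (α ^ i) c
      = ∑ e ∈ c.support, algebraMap Fq (AlgebraicClosure Fq) (c.coeff e) * (α ^ i) ^ e := by
    intro i
    rw [Polynomial.aeval_def, Polynomial.eval₂_eq_sum, Polynomial.sum_def]
  have hroot' : ∀ i ∈ ({0, 1, 3, 4, 6, 7} : Finset ℕ),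
      ∑ e ∈ c.support, algebraMap Fq (AlgebraicClosure Fq) (c.coeff e) * (α ^ i) ^ e = 0 := by
    intro i hi
    rw [← hsum i]
    exact hroot i (hS hi)
  have hlt_n : ∀ e ∈ c.support, e < n := fun e he =>
    lt_of_le_of_lt (Polynomial.le_natDegree_of_mem_supp e he) hdeg
  have hempty : c.support = ∅ := by
    refine cyclic_aux c.support (fun e => algebraMap Fq (AlgebraicClosure Fq) (c.coeff e))
      (fun e => α ^ e) (fun e => α ^ (3 * e)) ?_ ?_ ?_ ?_ ?_ (by omega) ?_ ?_ ?_ ?_ ?_ ?_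
    · intro e he h
      exact Polynomial.mem_support_iff.mp he
        ((algebraMap Fq (AlgebraicClosure Fq)).injective (by rw [map_zero]; exact h))
    · exact fun e _ => pow_ne_zero _ hα0
    · exact fun e _ => pow_ne_zero _ hα0
    · intro e _
      show (α ^ e) ^ 3 = α ^ (3 * e)
      rw [← pow_mul, Nat.mul_comm]
    · intro e he e' he' h
      have h' : α ^ (3 * e) = α ^ (3 * e') := h
      have hcopn3 : Nat.Coprime n 3 :=
        Nat.Coprime.symm ((Nat.prime_three).coprime_iff_not_dvd.mpr h3)
      have key2 : ∀ a b : ℕ, a < n → b < n → a ≤ b → α ^ (3 * a) = α ^ (3 * b) → a = b := by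
        intro a b ha hb hle hab
        have h2 : α ^ (3 * a) * α ^ (3 * (b - a)) = α ^ (3 * a) * 1 := by
          rw [mul_one, ← pow_add, show 3 * a + 3 * (b - a) = 3 * b by omega, hab]
        have hsub : α ^ (3 * (b - a)) = 1 := mul_left_cancel₀ (pow_ne_zero _ hα0) h2
        have hdvd : n ∣ 3 * (b - a) := by
          rw [← hα]
          exact orderOf_dvd_of_pow_eq_one hsub
        rw [Nat.mul_comm] at hdvd
        have hdvd' : n ∣ (b - a) := Nat.Coprime.dvd_of_dvd_mul_right hcopn3 hdvd
        have := Nat.eq_zero_of_dvd_of_lt hdvd'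
        omega
      rcases le_total e e' with hle | hle
      · exact key2 e e' (hlt_n e he) (hlt_n e' he') hle h'
      · exact (key2 e' e (hlt_n e' he') (hlt_n e he) hle h'.symm).symm
    · have h := hroot' 0 (by decide)
      simpa using h
    · have h := hroot' 1 (by decide)
      simpa using h
    · have h := hroot' 3 (by decide)
      rw [← h]
      refine Finset.sum_congr rfl (fun e _ => ?_)
      show (algebraMap Fq (AlgebraicClosure Fq)) (c.coeff e) * α ^ (3 * e)
        = (algebraMap Fq (AlgebraicClosure Fq)) (c.coeff e) * (α ^ 3) ^ e
      rw [← pow_mul]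
    · have h := hroot' 4 (by decide)
      rw [← h]
      refine Finset.sum_congr rfl (fun e _ => ?_)
      show (algebraMap Fq (AlgebraicClosure Fq)) (c.coeff e) * α ^ e * α ^ (3 * e)
        = (algebraMap Fq (AlgebraicClosure Fq)) (c.coeff e) * (α ^ 4) ^ e
      rw [mul_assoc, ← pow_add, ← pow_mul, show e + 3 * e = 4 * e by ring]
    · have h := hroot' 6 (by decide)
      rw [← h]
      refine Finset.sum_congr rfl (fun e _ => ?_)
      show (algebraMap Fq (AlgebraicClosure Fq)) (c.coeff e) * (α ^ (3 * e)) ^ 2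
        = (algebraMap Fq (AlgebraicClosure Fq)) (c.coeff e) * (α ^ 6) ^ e
      rw [← pow_mul, ← pow_mul, show 3 * e * 2 = 6 * e by ring]
    · have h := hroot' 7 (by decide)
      rw [← h]
      refine Finset.sum_congr rfl (fun e _ => ?_)
      show (algebraMap Fq (AlgebraicClosure Fq)) (c.coeff e) * α ^ e * (α ^ (3 * e)) ^ 2
        = (algebraMap Fq (AlgebraicClosure Fq)) (c.coeff e) * (α ^ 7) ^ e
      rw [← pow_mul, mul_assoc, ← pow_add, ← pow_mul, show e + 3 * e * 2 = 7 * e by ring]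
  exact hc (Polynomial.support_eq_empty.mp hempty)
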